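/- Let f₀ be the forecasting strategy that deterministically predicts the outcome sequence (0,1,1,1,...) and f₁ the strategy that deterministically predicts (1,1,1,...), so P₀^f = δ_{(0,1,1,...)} and P₁^f = δ_{(1,1,1,...)}. Then P₀^f and P₁^f are mutually singular, and consequently any comparison test T with T((0,1,1,...), f₀, f₁) = 1/2 is not reasonable. -/

import Mathlib

open MeasureTheory Filter Set
open scoped ENNReal

abbrev BinSeq := ℕ → Bool

/-- The cylinder set of all sequences sharing the first `t` coordinates with `ω`. -/
def cyl (ω : BinSeq) (t : ℕ) : Set BinSeq := {ω' | ∀ s < t, ω' s = ω s}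

/-- A forecasting strategy: it maps a finite history of (outcome, forecast of expert 0,
forecast of expert 1) triples to a probability (of the outcome `true`) in `[0,1]`. -/
structure Strategy where
  f : List (Bool × ℝ≥0∞ × ℝ≥0∞) → ℝ≥0∞
  le_one : ∀ h, f h ≤ 1

/-- The probability that a forecast `p` (probability of `true`) assigns to outcome `b`. -/
noncomputable def fprob (p : ℝ≥0∞) (b : Bool) : ℝ≥0∞ := if b then p else 1 - p

/-- The play-path history of length `n` induced by the realization `ω` and the ordered
pair of forecasting strategies `(f₀, f₁)`. -/
def hist (ω : BinSeq) (f₀ f₁ : Strategy) : ℕ → List (Bool × ℝ≥0∞ × ℝ≥0∞)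
  | 0 => []
  | n + 1 =>
      hist ω f₀ f₁ n ++ [(ω n, f₀.f (hist ω f₀ f₁ n), f₁.f (hist ω f₀ f₁ n))]

/-- The infinite play path induced by `(ω, f₀, f₁)`. -/
def play (ω : BinSeq) (f₀ f₁ : Strategy) (n : ℕ) : Bool × ℝ≥0∞ × ℝ≥0∞ :=
  (ω n, f₀.f (hist ω f₀ f₁ n), f₁.f (hist ω f₀ f₁ n))

/-- `P₀` and `P₁` are the pair of probability measures induced by the ordered pair of
forecasting strategies `(f₀, f₁)`: on each cylinder they are the product of the
corresponding one-step-ahead forecasts along the play path. -/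
def Induces (f₀ f₁ : Strategy) (P₀ P₁ : Measure BinSeq) : Prop :=
  IsProbabilityMeasure P₀ ∧ IsProbabilityMeasure P₁ ∧
  (∀ ω t, P₀ (cyl ω t) = ∏ n ∈ Finset.range t, fprob (f₀.f (hist ω f₀ f₁ n)) (ω n)) ∧
  (∀ ω t, P₁ (cyl ω t) = ∏ n ∈ Finset.range t, fprob (f₁.f (hist ω f₀ f₁ n)) (ω n))

/-- A comparison test: given a realization and an ordered pair of forecasting
strategies, it outputs a verdict (intended values: `0`, `1/2`, `1`). -/
abbrev Test := BinSeq → Strategy → Strategy → ℝ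

/-- The test takes only the values `0`, `1/2`, `1`. -/
def TestValued (T : Test) : Prop := ∀ ω f₀ f₁, T ω f₀ f₁ = 0 ∨ T ω f₀ f₁ = 1/2 ∨ T ω f₀ f₁ = 1

/-- Anonymity: the verdict does not depend on the identity of the experts. -/
def Anonymous (T : Test) : Prop := ∀ ω f₀ f₁, T ω f₀ f₁ = 1 - T ω f₁ f₀

/-- Non-counterfactual: the verdict depends only on the realized play path. -/
def NonCounterfactual (T : Test) : Prop :=
  ∃ T' : (ℕ → Bool × ℝ≥0∞ × ℝ≥0∞) → ℝ, ∀ ω f₀ f₁, T ω f₀ f₁ = T' (play ω f₀ f₁)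

/-- Reasonableness: for every pair of strategies with induced measures `(P₀, P₁)` and
every measurable set that one of the induced measures deems positive while the other
deems null, with positive probability the test points at the corresponding expert. -/
def Reasonable (T : Test) : Prop :=
  ∀ f₀ f₁ : Strategy, ∀ P₀ P₁ : Measure BinSeq, Induces f₀ f₁ P₀ P₁ →
    ∀ A : Set BinSeq, MeasurableSet A →
      ((0 < P₀ A ∧ P₁ A = 0) → 0 < P₀ (A ∩ {ω | T ω f₀ f₁ = 0})) ∧
      ((0 < P₁ A ∧ P₀ A = 0) → 0 < P₁ (A ∩ {ω | T ω f₀ f₁ = 1}))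

/-- The strategy deterministically predicting the sequence `(0,1,1,1,...)`. -/
noncomputable def strat0 : Strategy where
  f := fun h => match h with | [] => 0 | _ => 1
  le_one := fun h => by cases h <;> simp

/-- The strategy deterministically predicting the sequence `(1,1,1,...)`. -/
noncomputable def strat1 : Strategy where
  f := fun _ => 1
  le_one := fun _ => le_rfl

/-- The realization `(0,1,1,1,...)`. -/
def seq0 : BinSeq := fun n => decide (n ≠ 0)

/-! `P₀` gives mass one to every cylinder around `(0,1,1,…)`, hence is the Dirac mass there,
while `P₁` gives mass zero to the cylinder `{ω | ω 0 = false}`. Reasonableness applied to that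
cylinder forces the verdict `0` at the one point `P₀` charges. -/

lemma measurableSet_cyl (ω : BinSeq) (t : ℕ) : MeasurableSet (cyl ω t) := by
  have h : cyl ω t = ⋂ s ∈ Finset.range t, (fun ω' : BinSeq => ω' s) ⁻¹' {ω s} := by
    ext ω'; simp [cyl]
  rw [h]
  exact MeasurableSet.biInter (Finset.range t).countable_toSet
    (fun s _ => measurable_pi_apply s (measurableSet_singleton _))

lemma iInter_cyl (ω : BinSeq) : ⋂ t, cyl ω t = {ω} := by
  ext ω'
  simp only [mem_iInter, mem_singleton_iff, cyl, mem_ofPred_eq]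
  refine ⟨fun h => funext fun n => h (n + 1) n n.lt_succ_self, ?_⟩
  rintro rfl _ _ _
  rfl

lemma ae_eq_of_forall_measure_cyl_eq_one {P : Measure BinSeq} [IsProbabilityMeasure P]
    {ω : BinSeq} (h : ∀ t, P (cyl ω t) = 1) : ∀ᵐ x ∂P, x = ω := by
  have hcyl : ∀ t, ∀ᵐ x ∂P, x ∈ cyl ω t := fun t =>
    (mem_ae_iff_prob_eq_one (measurableSet_cyl ω t)).2 (h t)
  filter_upwards [ae_all_iff.2 hcyl] with x hx
  rwa [← mem_singleton_iff, ← iInter_cyl, mem_iInter]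

lemma Reasonable.eq_zero_of_ae_eq {T : Test} (hT : Reasonable T) {f₀ f₁ : Strategy}
    {P₀ P₁ : Measure BinSeq} (hInd : Induces f₀ f₁ P₀ P₁) {ω : BinSeq}
    (hω : ∀ᵐ x ∂P₀, x = ω) {A : Set BinSeq} (hA : MeasurableSet A) (h₀ : 0 < P₀ A)
    (h₁ : P₁ A = 0) : T ω f₀ f₁ = 0 := by
  by_contra hne
  have hpos := (hT f₀ f₁ P₀ P₁ hInd A hA).1 ⟨h₀, h₁⟩
  refine hpos.ne' (measure_mono_null ?_ (ae_iff.1 hω))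
  rintro x ⟨-, hx⟩ rfl
  exact hne hx

lemma strat0_f_hist_succ (ω : BinSeq) (f₀ f₁ : Strategy) (n : ℕ) :
    strat0.f (hist ω f₀ f₁ (n + 1)) = 1 := by
  rw [hist]
  cases hist ω f₀ f₁ n <;> rfl

lemma fprob_strat0_hist_seq0 (f₀ f₁ : Strategy) (n : ℕ) :
    fprob (strat0.f (hist seq0 f₀ f₁ n)) (seq0 n) = 1 := by
  cases n with
  | zero => simp [hist, strat0, fprob, seq0]
  | succ n => simp [strat0_f_hist_succ, fprob, seq0]

/-- The measures induced by the deterministic strategies predicting `(0,1,1,...)` and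
`(1,1,1,...)` are mutually singular, and consequently any comparison test that is
inconclusive at the realization `(0,1,1,...)` is not reasonable. -/
theorem cross_calibration_counterexample
    (P₀ P₁ : Measure BinSeq) (hInd : Induces strat0 strat1 P₀ P₁) :
    (∃ A : Set BinSeq, MeasurableSet A ∧ P₀ A = 1 ∧ P₁ A = 0) ∧
    ∀ T : Test, T seq0 strat0 strat1 = 1/2 → ¬ Reasonable T := by
  have := hInd.1
  have hcyl₀ (t : ℕ) : P₀ (cyl seq0 t) = 1 := by
    rw [hInd.2.2.1]
    exact Finset.prod_eq_one fun n _ => fprob_strat0_hist_seq0 _ _ n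
  have hcyl₁ : P₁ (cyl seq0 1) = 0 := by
    simp [hInd.2.2.2, strat1, fprob, seq0]
  refine ⟨⟨cyl seq0 1, measurableSet_cyl _ _, hcyl₀ 1, hcyl₁⟩, fun T hT hR => ?_⟩
  have hverdict : T seq0 strat0 strat1 = 0 :=
    hR.eq_zero_of_ae_eq hInd (ae_eq_of_forall_measure_cyl_eq_one hcyl₀)
      (measurableSet_cyl _ _) (by simp [hcyl₀ 1]) hcyl₁
  norm_num [hverdict] at hT
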